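/- Let k ≥ 2, p = p_1 + ... + p_k, and let Σ ∈ R^{p×p} be the block matrix with diagonal blocks Σ_{ii} = U_i U_i^T + Ψ_{ii} and off-diagonal blocks Σ_{ij} = U_i U_j^T (i ≠ j), where U_i ∈ R^{p_i×r}, each Ψ_{ii} is symmetric positive definite, and Σ0 = diag(Σ_{11},...,Σ_{kk}). Let U = [U_1^T, ..., U_k^T]^T ∈ R^{p×r} and assume rank(U) = r and σ_r(Σ0^{-1/2} U) ≥ 1. Define Y ∈ R^{p×r} as the block matrix whose i-th block is (U_i^†)^T, where U_i^† ∈ R^{r×p_i} is the Moore–Penrose pseudoinverse of U_i (i.e. Y = [U_1^†, U_2^†, ..., U_k^†]^T). Then the multiplicity of 1 as a generalized eigenvalue of Σ with respect to Σ0 equals p − Σ_{i=1}^k rank(U_i) + r − rank(U − U Y^T U). -/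

import Mathlib

open MeasureTheory ProbabilityTheory Matrix Real
open scoped Classical

noncomputable section

/-- Frobenius norm of a real matrix. -/
def frob {m n : ℕ} (M : Matrix (Fin m) (Fin n) ℝ) : ℝ :=
  Real.sqrt (∑ i, ∑ j, (M i j) ^ 2)

/-- Distance between `p × r` matrices modulo right multiplication by an orthogonal matrix:
`dist(U,V) = min_{P ∈ O(r)} ‖U P - V‖_F`. -/
def gdist {p r : ℕ} (U V : Matrix (Fin p) (Fin r) ℝ) : ℝ :=
  sInf {x : ℝ | ∃ P : Matrix (Fin r) (Fin r) ℝ, Pᵀ * P = 1 ∧ x = frob (U * P - V)}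

/-- Centered multivariate Gaussian with covariance `S`, as the law of `S^{1/2} z` for a
standard Gaussian vector `z`. -/
def mvGaussian {m : ℕ} (S : Matrix (Fin m) (Fin m) ℝ) : Measure (Fin m → ℝ) :=
  if h : S.PosSemidef then
    (Measure.pi fun _ : Fin m => gaussianReal 0 1).map fun z =>
      ((h.1.eigenvectorUnitary : Matrix (Fin m) (Fin m) ℝ) * diagonal (Real.sqrt ∘ h.1.eigenvalues) *
        star (h.1.eigenvectorUnitary : Matrix (Fin m) (Fin m) ℝ)).mulVec z
  else 0

/-- Law of `n` i.i.d. samples from `N_m(0, S)`. -/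
def iidLaw (n : ℕ) {m : ℕ} (S : Matrix (Fin m) (Fin m) ℝ) : Measure (Fin n → Fin m → ℝ) :=
  Measure.pi fun _ : Fin n => mvGaussian S

def sampleMean {n m : ℕ} (X : Fin n → Fin m → ℝ) (i : Fin m) : ℝ := (∑ t, X t i) / n

/-- Sample covariance matrix. -/
def sampleCov {n m : ℕ} (X : Fin n → Fin m → ℝ) : Matrix (Fin m) (Fin m) ℝ :=
  Matrix.of fun i j => (∑ t, (X t i - sampleMean X i) * (X t j - sampleMean X j)) / n

/-- Block-diagonal part of a matrix with respect to block labels `β`. -/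
def blockPart {m k : ℕ} (β : Fin m → Fin k) (M : Matrix (Fin m) (Fin m) ℝ) :
    Matrix (Fin m) (Fin m) ℝ :=
  Matrix.of fun i j => if β i = β j then M i j else 0

/-- Rows of `M` belonging to block `i`, all other rows zeroed out. -/
def restrictRows {m k c : ℕ} (β : Fin m → Fin k) (i : Fin k) (M : Matrix (Fin m) (Fin c) ℝ) :
    Matrix (Fin m) (Fin c) ℝ :=
  Matrix.of fun a b => if β a = i then M a b else 0

/-- ℓ₂ norm of row `i` of `M`. -/
def rowNorm {m r : ℕ} (M : Matrix (Fin m) (Fin r) ℝ) (i : Fin m) : ℝ :=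
  Real.sqrt (∑ j, (M i j) ^ 2)

/-- Set of indices of nonzero rows. -/
def rowSupport {m r : ℕ} (M : Matrix (Fin m) (Fin r) ℝ) : Set (Fin m) := {i | M i ≠ 0}

/-- `W'` is the hard thresholding of `W` keeping the `k` rows of largest ℓ₂ norm
(ties broken toward smaller indices). -/
def IsHT {m r : ℕ} (W : Matrix (Fin m) (Fin r) ℝ) (k : ℕ) (W' : Matrix (Fin m) (Fin r) ℝ) : Prop :=
  ∃ C : Finset (Fin m), C.card = min k m ∧ (∀ i ∈ C, W' i = W i) ∧ (∀ i ∉ C, W' i = 0) ∧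
    ∀ i ∈ C, ∀ j ∉ C, rowNorm W j < rowNorm W i ∨ (rowNorm W j = rowNorm W i ∧ i < j)

/-- Positive semidefinite square root (junk value `0` if not psd). -/
def psqrt {r : ℕ} (M : Matrix (Fin r) (Fin r) ℝ) : Matrix (Fin r) (Fin r) ℝ :=
  if h : M.PosSemidef then
    (h.1.eigenvectorUnitary : Matrix (Fin r) (Fin r) ℝ) * diagonal (Real.sqrt ∘ h.1.eigenvalues) *
      star (h.1.eigenvectorUnitary : Matrix (Fin r) (Fin r) ℝ)
  else 0

/-- Inverse square root. -/
def invSqrt {r : ℕ} (M : Matrix (Fin r) (Fin r) ℝ) : Matrix (Fin r) (Fin r) ℝ := (psqrt M)⁻¹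

/-- Nuclear norm `Tr √(Mᵀ M)`. -/
def nucNorm {a b : ℕ} (M : Matrix (Fin a) (Fin b) ℝ) : ℝ := (psqrt (Mᵀ * M)).trace

/-- Entrywise ℓ₁ norm. -/
def l1Norm {a b : ℕ} (M : Matrix (Fin a) (Fin b) ℝ) : ℝ := ∑ i, ∑ j, |M i j|

/-- Entrywise sup norm. -/
def maxAbs {a b : ℕ} (M : Matrix (Fin a) (Fin b) ℝ) : ℝ := sSup {x : ℝ | ∃ i j, x = |M i j|}

/-- Membership in the Fantope `{X : 0 ⪯ X ⪯ I, Tr X = r}`. -/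
def InFantope {p : ℕ} (r : ℕ) (X : Matrix (Fin p) (Fin p) ℝ) : Prop :=
  X.PosSemidef ∧ (1 - X).PosSemidef ∧ X.trace = (r : ℝ)

/-- `F` minimizes `-⟨Sh, ·⟩ + ρ ‖·‖_1` over symmetric matrices whose conjugation by
`S0h^{1/2}` lies in the Fantope. -/
def IsFantopeMin {p : ℕ} (r : ℕ) (Sh S0h : Matrix (Fin p) (Fin p) ℝ) (ρ : ℝ)
    (F : Matrix (Fin p) (Fin p) ℝ) : Prop :=
  F.IsSymm ∧ InFantope r (psqrt S0h * F * psqrt S0h) ∧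
    ∀ G : Matrix (Fin p) (Fin p) ℝ, G.IsSymm → InFantope r (psqrt S0h * G * psqrt S0h) →
      -(Shᵀ * F).trace + ρ * l1Norm F ≤ -(Shᵀ * G).trace + ρ * l1Norm G

/-- `L` maximizes `⟨Sh, L Lᵀ⟩` subject to `Lᵀ S0h L = I_r` and row support inside `I`. -/
def IsRestrictedMax {p r : ℕ} (Sh S0h : Matrix (Fin p) (Fin p) ℝ) (I : Finset (Fin p))
    (L : Matrix (Fin p) (Fin r) ℝ) : Prop :=
  Lᵀ * S0h * L = 1 ∧ (∀ i ∉ I, L i = 0) ∧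
    ∀ L' : Matrix (Fin p) (Fin r) ℝ, L'ᵀ * S0h * L' = 1 → (∀ i ∉ I, L' i = 0) →
      (Shᵀ * (L' * L'ᵀ)).trace ≤ (Shᵀ * (L * Lᵀ)).trace

/-- Kullback–Leibler divergence `∫ log (dP/dQ) dP`. -/
def klDivR {α : Type*} [MeasurableSpace α] (P Q : Measure α) : ℝ :=
  ∫ x, Real.log (P.rnDeriv Q x).toReal ∂P

/-!
Since `Kᵀ Σ₀ K = 1`, we have `Σ - Σ₀ = Σ₀ K (Λ - 1) Kᵀ Σ₀` with `Σ₀ K` invertible, so the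
multiplicity of the generalized eigenvalue `1` is `p - rank (Σ - Σ₀)`. With `U_i`, `Y_i` the row
blocks of `U` and `Y`, the block-diagonal part of `U Uᵀ` is `∑ U_i U_iᵀ`, so
`Σ - Σ₀ = M := U Uᵀ - ∑ U_i U_iᵀ`. The map `x ↦ (x - Y Uᵀ x, Uᵀ x)` identifies `ker M` with
`ker P × ker (1 - Yᵀ U)`, where `P = ∑ Y_i U_iᵀ` is an idempotent of trace `∑ rank U_i`; finally
`rank (U - U Yᵀ U) = rank (1 - Yᵀ U)` because `U` has full column rank.
-/

namespace Matrix

variable {𝕜 : Type*} [Field 𝕜] {l m n : Type*} [Fintype n]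

lemma rank_add_finrank_ker (A : Matrix m n 𝕜) :
    A.rank + Module.finrank 𝕜 (LinearMap.ker A.mulVecLin) = Fintype.card n := by
  rw [rank, LinearMap.finrank_range_add_finrank_ker, Module.finrank_fintype_fun_eq_card]

lemma rank_eq_trace_of_isIdempotentElem [CharZero 𝕜] [DecidableEq n] {A : Matrix n n 𝕜}
    (hA : IsIdempotentElem A) : (A.rank : 𝕜) = A.trace := by
  have hproj : IsIdempotentElem (toLin' A) := hA.map toLinAlgEquiv'
  rw [← trace_toLin'_eq, (LinearMap.IsIdempotentElem.isProj_range _ hproj).trace, rank,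
    toLin'_apply']

lemma rank_mul_eq_right_of_rank_eq_card [Fintype l] {A : Matrix m n 𝕜}
    (hA : A.rank = Fintype.card n) (B : Matrix n l 𝕜) : (A * B).rank = B.rank := by
  have hinj : Function.Injective A.mulVecLin := by
    rw [← LinearMap.ker_eq_bot, ← Submodule.finrank_eq_zero]
    have := A.rank_add_finrank_ker
    omega
  rw [rank, rank, mulVecLin_mul, LinearMap.range_comp]
  exact (LinearEquiv.finrank_eq (Submodule.equivMapOfInjective _ hinj _)).symm

lemma rank_mul_eq_right_of_mul_mul_eq_self [Fintype m] {A : Matrix m n 𝕜} {G : Matrix n m 𝕜}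
    (h : A * G * A = A) : (G * A).rank = A.rank := by
  refine le_antisymm (rank_mul_le_right _ _) ?_
  conv_lhs => rw [← h, Matrix.mul_assoc]
  exact rank_mul_le_right _ _

lemma one_sub_mulVec_eq_zero_iff [DecidableEq n] {A : Matrix n n 𝕜} {c : n → 𝕜} :
    (1 - A) *ᵥ c = 0 ↔ A *ᵥ c = c := by
  rw [sub_mulVec, one_mulVec, sub_eq_zero, eq_comm]

lemma ncard_eq_one_add_rank_sub_of_congr_diagonal [DecidableEq n] {S S0 K : Matrix n n 𝕜}
    {lam : n → 𝕜} (hK : Kᵀ * S0 * K = 1) (hS : S = S0 * K * diagonal lam * Kᵀ * S0) :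
    {j | lam j = 1}.ncard + (S - S0).rank = Fintype.card n := by
  have hdet : Kᵀ.det * S0.det * K.det = 1 := by rw [← det_mul, ← det_mul, hK, det_one]
  rw [det_transpose] at hdet
  have hK_det : IsUnit K.det := .of_mul_eq_one (K.det * S0.det) (by rw [← hdet]; ring)
  have hS0_det : IsUnit S0.det := .of_mul_eq_one (K.det * K.det) (by rw [← hdet]; ring)
  have hK_inv : K * (Kᵀ * S0) = 1 := mul_eq_one_comm.1 hK
  have hsub : S - S0 = S0 * K * diagonal (fun j => lam j - 1) * (Kᵀ * S0) := by
    rw [← diagonal_sub (d₂ := fun _ => 1), diagonal_one, Matrix.mul_sub, Matrix.sub_mul,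
      Matrix.mul_one, Matrix.mul_assoc S0 K (Kᵀ * S0), hK_inv, Matrix.mul_one, hS]
    simp only [Matrix.mul_assoc]
  rw [hsub, rank_mul_eq_left_of_isUnit_det _ _ (by simpa using hK_det.mul hS0_det),
    rank_mul_eq_right_of_isUnit_det _ _ (by simpa using hS0_det.mul hK_det), rank_diagonal,
    ← Nat.card_coe_set_eq, Nat.card_eq_fintype_card]
  simp only [sub_ne_zero]
  change Fintype.card {j // lam j = 1} + _ = _
  rw [Fintype.card_subtype_compl, Nat.add_sub_cancel' (Fintype.card_subtype_le _)]

section BlockInverse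

variable {ι : Type*} [Fintype m]

/-- Each `(Yi i)ᵀ` is a {1,4}-inverse of `Ui i` in Penrose's classification. -/
structure IsOrthogonalBlockInverse (Ui Yi : ι → Matrix m n 𝕜) : Prop where
  transpose_mul_of_ne : ∀ ⦃i j⦄, i ≠ j → (Yi i)ᵀ * Ui j = 0
  mul_transpose_mul : ∀ i, Ui i * (Yi i)ᵀ * Ui i = Ui i
  transpose_mul_symm : ∀ i, ((Yi i)ᵀ * Ui i)ᵀ = (Yi i)ᵀ * Ui i

namespace IsOrthogonalBlockInverse

variable {Ui Yi : ι → Matrix m n 𝕜} {U Y : Matrix m n 𝕜} (h : IsOrthogonalBlockInverse Ui Yi)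
include h

lemma transpose_mul_comm (i : ι) : (Ui i)ᵀ * Yi i = (Yi i)ᵀ * Ui i := by
  rw [← h.transpose_mul_symm i, transpose_mul, transpose_transpose]

lemma transpose_mul_of_ne' {i j : ι} (hij : i ≠ j) : (Ui i)ᵀ * Yi j = 0 := by
  rw [← transpose_transpose (Yi j), ← transpose_mul, h.transpose_mul_of_ne hij.symm,
    transpose_zero]

lemma transpose_mul_mul_transpose (i : ι) : (Yi i)ᵀ * Ui i * (Ui i)ᵀ = (Ui i)ᵀ := by
  rw [← h.transpose_mul_symm i, ← transpose_mul, ← Matrix.mul_assoc, h.mul_transpose_mul i]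

variable [Fintype ι]

lemma transpose_mul_sum (hU : ∑ j, Ui j = U) (i : ι) : (Yi i)ᵀ * U = (Yi i)ᵀ * Ui i := by
  rw [← hU, Matrix.mul_sum]
  exact Finset.sum_eq_single i (fun j _ hj => h.transpose_mul_of_ne hj.symm) (by simp)

lemma transpose_mul_sum' (hY : ∑ j, Yi j = Y) (i : ι) : (Ui i)ᵀ * Y = (Yi i)ᵀ * Ui i := by
  rw [← hY, Matrix.mul_sum, ← h.transpose_mul_comm]
  exact Finset.sum_eq_single i (fun j _ hj => h.transpose_mul_of_ne' hj.symm) (by simp)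

lemma transpose_mul_eq_sum (hU : ∑ j, Ui j = U) (hY : ∑ j, Yi j = Y) :
    Yᵀ * U = ∑ i, (Yi i)ᵀ * Ui i := by
  rw [← hY, transpose_sum, Matrix.sum_mul]
  exact Finset.sum_congr rfl fun i _ => h.transpose_mul_sum hU i

lemma transpose_sum_mul_comm (hU : ∑ j, Ui j = U) (hY : ∑ j, Yi j = Y) : Uᵀ * Y = Yᵀ * U := by
  rw [h.transpose_mul_eq_sum hU hY, ← hU, transpose_sum, Matrix.sum_mul]
  exact Finset.sum_congr rfl fun i _ => h.transpose_mul_sum' hY i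

lemma transpose_mul_projection (i : ι) : (Ui i)ᵀ * ∑ j, Yi j * (Ui j)ᵀ = (Ui i)ᵀ := by
  rw [Matrix.mul_sum, Finset.sum_eq_single i
    (fun j _ hj => by rw [← Matrix.mul_assoc, h.transpose_mul_of_ne' hj.symm, Matrix.zero_mul])
    (by simp), ← Matrix.mul_assoc, h.transpose_mul_comm, h.transpose_mul_mul_transpose]

lemma rank_projection [CharZero 𝕜] [DecidableEq m] [DecidableEq n] :
    (∑ i, Yi i * (Ui i)ᵀ).rank = ∑ i, (Ui i).rank := by
  have hidem : IsIdempotentElem (∑ i, Yi i * (Ui i)ᵀ) := by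
    rw [IsIdempotentElem, Matrix.sum_mul]
    exact Finset.sum_congr rfl fun i _ => by rw [Matrix.mul_assoc, h.transpose_mul_projection]
  have hblock (i : ι) : IsIdempotentElem ((Yi i)ᵀ * Ui i) := by
    rw [IsIdempotentElem, Matrix.mul_assoc, ← Matrix.mul_assoc (Ui i), h.mul_transpose_mul]
  suffices ((∑ i, Yi i * (Ui i)ᵀ).rank : 𝕜) = ∑ i, ((Ui i).rank : 𝕜) by exact_mod_cast this
  rw [rank_eq_trace_of_isIdempotentElem hidem, trace_sum]
  refine Finset.sum_congr rfl fun i _ => ?_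
  rw [trace_mul_comm, h.transpose_mul_comm, ← rank_eq_trace_of_isIdempotentElem (hblock i),
    rank_mul_eq_right_of_mul_mul_eq_self (h.mul_transpose_mul i)]

lemma mulVec_projection_eq_zero_iff (z : m → 𝕜) :
    (∑ i, Yi i * (Ui i)ᵀ) *ᵥ z = 0 ↔ ∀ i, (Ui i)ᵀ *ᵥ z = 0 := by
  refine ⟨fun hz i => ?_, fun hz => ?_⟩
  · rw [← h.transpose_mul_projection i, ← mulVec_mulVec, hz, mulVec_zero]
  · simp only [sum_mulVec, ← mulVec_mulVec, hz, mulVec_zero, Finset.sum_const_zero]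

lemma transpose_mul_offDiag (hU : ∑ i, Ui i = U) (j : ι) :
    (Yi j)ᵀ * (U * Uᵀ - ∑ i, Ui i * (Ui i)ᵀ) = (Yi j)ᵀ * Ui j * Uᵀ - (Ui j)ᵀ := by
  rw [Matrix.mul_sub, ← Matrix.mul_assoc, h.transpose_mul_sum hU, Matrix.mul_sum,
    Finset.sum_eq_single j
      (fun i _ hi => by rw [← Matrix.mul_assoc, h.transpose_mul_of_ne hi.symm, Matrix.zero_mul])
      (by simp), ← Matrix.mul_assoc, h.transpose_mul_mul_transpose]

lemma offDiag_mul (hU : ∑ i, Ui i = U) (hY : ∑ i, Yi i = Y) :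
    (U * Uᵀ - ∑ i, Ui i * (Ui i)ᵀ) * Y = U * (Yᵀ * U) - U := by
  rw [Matrix.sub_mul, Matrix.mul_assoc, h.transpose_sum_mul_comm hU hY, Matrix.sum_mul]
  congr 1
  conv_rhs => rw [← hU]
  exact Finset.sum_congr rfl fun i _ => by
    rw [Matrix.mul_assoc, h.transpose_mul_sum' hY, ← Matrix.mul_assoc, h.mul_transpose_mul]

lemma mulVec_transpose_eq_of_mulVec_offDiag (hU : ∑ i, Ui i = U) {x : m → 𝕜}
    (hx : (U * Uᵀ - ∑ i, Ui i * (Ui i)ᵀ) *ᵥ x = 0) (j : ι) :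
    ((Yi j)ᵀ * Ui j) *ᵥ (Uᵀ *ᵥ x) = (Ui j)ᵀ *ᵥ x := by
  have hj : (Yi j)ᵀ *ᵥ ((U * Uᵀ - ∑ i, Ui i * (Ui i)ᵀ) *ᵥ x) = 0 := by rw [hx, mulVec_zero]
  rwa [mulVec_mulVec, h.transpose_mul_offDiag hU j, sub_mulVec, ← mulVec_mulVec,
    sub_eq_zero] at hj

lemma mulVec_one_sub_of_mulVec_offDiag [DecidableEq n] (hU : ∑ i, Ui i = U)
    (hY : ∑ i, Yi i = Y) {x : m → 𝕜} (hx : (U * Uᵀ - ∑ i, Ui i * (Ui i)ᵀ) *ᵥ x = 0) :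
    (1 - Yᵀ * U) *ᵥ (Uᵀ *ᵥ x) = 0 := by
  rw [one_sub_mulVec_eq_zero_iff, h.transpose_mul_eq_sum hU hY, sum_mulVec,
    Finset.sum_congr rfl fun j _ => h.mulVec_transpose_eq_of_mulVec_offDiag hU hx j,
    ← sum_mulVec, ← transpose_sum, hU]

lemma mulVec_projection_of_mulVec_offDiag (hU : ∑ i, Ui i = U) (hY : ∑ i, Yi i = Y)
    {x : m → 𝕜} (hx : (U * Uᵀ - ∑ i, Ui i * (Ui i)ᵀ) *ᵥ x = 0) :
    (∑ i, Yi i * (Ui i)ᵀ) *ᵥ (x - Y *ᵥ (Uᵀ *ᵥ x)) = 0 := by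
  refine (h.mulVec_projection_eq_zero_iff _).2 fun j => ?_
  rw [mulVec_sub, mulVec_mulVec, h.transpose_mul_sum' hY,
    h.mulVec_transpose_eq_of_mulVec_offDiag hU hx, sub_self]

lemma mulVec_transpose_of_mulVec_projection (hU : ∑ i, Ui i = U) {z : m → 𝕜}
    (hz : (∑ i, Yi i * (Ui i)ᵀ) *ᵥ z = 0) : Uᵀ *ᵥ z = 0 := by
  rw [← hU, transpose_sum, sum_mulVec]
  exact Finset.sum_eq_zero fun i _ => (h.mulVec_projection_eq_zero_iff z).1 hz i

lemma mulVec_offDiag_add [DecidableEq n] (hU : ∑ i, Ui i = U) (hY : ∑ i, Yi i = Y)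
    {z : m → 𝕜} {c : n → 𝕜} (hz : (∑ i, Yi i * (Ui i)ᵀ) *ᵥ z = 0) (hc : (1 - Yᵀ * U) *ᵥ c = 0) :
    (U * Uᵀ - ∑ i, Ui i * (Ui i)ᵀ) *ᵥ (z + Y *ᵥ c) = 0 := by
  have hUz : (U * Uᵀ) *ᵥ z = 0 := by
    rw [← mulVec_mulVec, h.mulVec_transpose_of_mulVec_projection hU hz, mulVec_zero]
  have hUiz (i : ι) : (Ui i * (Ui i)ᵀ) *ᵥ z = 0 := by
    rw [← mulVec_mulVec, (h.mulVec_projection_eq_zero_iff z).1 hz i, mulVec_zero]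
  have hYc : (U * (Yᵀ * U) - U) *ᵥ c = 0 := by
    rw [sub_mulVec, ← mulVec_mulVec, one_sub_mulVec_eq_zero_iff.1 hc, sub_self]
  rw [mulVec_add, mulVec_mulVec, h.offDiag_mul hU hY, hYc, sub_mulVec, hUz, sum_mulVec,
    Finset.sum_eq_zero fun i _ => hUiz i, sub_zero, add_zero]

def kerOffDiagEquiv [DecidableEq n] (hU : ∑ i, Ui i = U) (hY : ∑ i, Yi i = Y) :
    LinearMap.ker (U * Uᵀ - ∑ i, Ui i * (Ui i)ᵀ).mulVecLin ≃ₗ[𝕜]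
      LinearMap.ker (∑ i, Yi i * (Ui i)ᵀ).mulVecLin × LinearMap.ker (1 - Yᵀ * U).mulVecLin where
  toFun x := (⟨x - Y *ᵥ (Uᵀ *ᵥ x), h.mulVec_projection_of_mulVec_offDiag hU hY x.2⟩,
    ⟨Uᵀ *ᵥ x, h.mulVec_one_sub_of_mulVec_offDiag hU hY x.2⟩)
  map_add' x y := by
    refine Prod.ext (Subtype.ext ?_) (Subtype.ext ?_)
    · simp only [Submodule.coe_add, mulVec_add, Prod.fst_add]
      abel
    · simp only [Submodule.coe_add, mulVec_add, Prod.snd_add]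
  map_smul' a x := by
    refine Prod.ext (Subtype.ext ?_) (Subtype.ext ?_) <;> simp [mulVec_smul, smul_sub]
  invFun w := ⟨w.1 + Y *ᵥ w.2, h.mulVec_offDiag_add hU hY w.1.2 w.2.2⟩
  left_inv x := by ext; simp
  right_inv w := by
    have hc : Uᵀ *ᵥ (w.1 + Y *ᵥ w.2 : m → 𝕜) = w.2 := by
      rw [mulVec_add, h.mulVec_transpose_of_mulVec_projection hU w.1.2, zero_add, mulVec_mulVec,
        h.transpose_sum_mul_comm hU hY, one_sub_mulVec_eq_zero_iff.1 w.2.2]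
    ext <;> simp [hc]

lemma finrank_ker_offDiag [DecidableEq n] (hU : ∑ i, Ui i = U) (hY : ∑ i, Yi i = Y) :
    Module.finrank 𝕜 (LinearMap.ker (U * Uᵀ - ∑ i, Ui i * (Ui i)ᵀ).mulVecLin) =
      Module.finrank 𝕜 (LinearMap.ker (∑ i, Yi i * (Ui i)ᵀ).mulVecLin) +
        Module.finrank 𝕜 (LinearMap.ker (1 - Yᵀ * U).mulVecLin) := by
  rw [(h.kerOffDiagEquiv hU hY).finrank_eq, Module.finrank_prod]

lemma rank_offDiag_add_card [CharZero 𝕜] [DecidableEq m] [DecidableEq n]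
    (hU : ∑ i, Ui i = U) (hY : ∑ i, Yi i = Y) (hUrank : U.rank = Fintype.card n) :
    (U * Uᵀ - ∑ i, Ui i * (Ui i)ᵀ).rank + Fintype.card n =
      ∑ i, (Ui i).rank + (U - U * Yᵀ * U).rank := by
  have hUYU : U - U * Yᵀ * U = U * (1 - Yᵀ * U) := by
    rw [Matrix.mul_sub, Matrix.mul_one, Matrix.mul_assoc]
  have hM := (U * Uᵀ - ∑ i, Ui i * (Ui i)ᵀ).rank_add_finrank_ker
  have hP := (∑ i, Yi i * (Ui i)ᵀ).rank_add_finrank_ker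
  have hG := (1 - Yᵀ * U).rank_add_finrank_ker
  rw [hUYU, rank_mul_eq_right_of_rank_eq_card hUrank, ← h.rank_projection]
  have := h.finrank_ker_offDiag hU hY
  omega

end IsOrthogonalBlockInverse

end BlockInverse

end Matrix

lemma sum_restrictRows {m k c : ℕ} (β : Fin m → Fin k) (M : Matrix (Fin m) (Fin c) ℝ) :
    ∑ i, restrictRows β i M = M := by
  ext a b
  simp [restrictRows, Matrix.sum_apply]

lemma transpose_restrictRows_mul_restrictRows_of_ne {m k c d : ℕ} (β : Fin m → Fin k)
    {i j : Fin k} (hij : i ≠ j) (A : Matrix (Fin m) (Fin c) ℝ) (B : Matrix (Fin m) (Fin d) ℝ) :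
    (restrictRows β i A)ᵀ * restrictRows β j B = 0 := by
  ext s t
  simp only [Matrix.mul_apply, Matrix.transpose_apply, restrictRows, Matrix.of_apply,
    Matrix.zero_apply]
  refine Finset.sum_eq_zero fun a _ => ?_
  by_cases hj : β a = j
  · rw [if_neg (fun hi => hij (hi.symm.trans hj)), zero_mul]
  · rw [if_neg hj, mul_zero]

lemma blockPart_mul_transpose {m k c : ℕ} (β : Fin m → Fin k) (A B : Matrix (Fin m) (Fin c) ℝ) :
    blockPart β (A * Bᵀ) = ∑ i, restrictRows β i A * (restrictRows β i B)ᵀ := by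
  ext a b
  simp only [blockPart, Matrix.of_apply, Matrix.sum_apply, Matrix.mul_apply,
    Matrix.transpose_apply, restrictRows]
  rw [Finset.sum_eq_single (β a) (fun j _ hj => Finset.sum_eq_zero fun s _ => by
    rw [if_neg (Ne.symm hj), zero_mul]) (by simp)]
  by_cases h : β a = β b
  · simp [h]
  · simp [h, Ne.symm h]

lemma blockPart_add {m k : ℕ} (β : Fin m → Fin k) (A B : Matrix (Fin m) (Fin m) ℝ) :
    blockPart β (A + B) = blockPart β A + blockPart β B := by
  ext a b
  by_cases h : β a = β b <;> simp [blockPart, h]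

theorem statement2_general
    (k p r : ℕ)
    (β : Fin p → Fin k)
    (U : Matrix (Fin p) (Fin r) ℝ)
    (Ψ : Matrix (Fin p) (Fin p) ℝ) (hΨblock : blockPart β Ψ = Ψ)
    (S S0 : Matrix (Fin p) (Fin p) ℝ)
    (hS : S = U * Uᵀ + Ψ) (hS0 : S0 = blockPart β S)
    (K : Matrix (Fin p) (Fin p) ℝ) (lam : Fin p → ℝ)
    (hKnorm : Kᵀ * S0 * K = 1) (hKdec : S = S0 * K * Matrix.diagonal lam * Kᵀ * S0)
    (hUrank : U.rank = r)
    -- `Y` is the block matrix whose `i`-th block is `(U_i†)ᵀ`, characterized blockwise by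
    -- the four Penrose conditions for the Moore–Penrose pseudoinverse
    (Y : Matrix (Fin p) (Fin r) ℝ)
    (hY : ∀ i : Fin k,
      restrictRows β i U * (restrictRows β i Y)ᵀ * restrictRows β i U = restrictRows β i U ∧
      (restrictRows β i Y)ᵀ * restrictRows β i U * (restrictRows β i Y)ᵀ =
        (restrictRows β i Y)ᵀ ∧
      (restrictRows β i U * (restrictRows β i Y)ᵀ)ᵀ =
        restrictRows β i U * (restrictRows β i Y)ᵀ ∧
      ((restrictRows β i Y)ᵀ * restrictRows β i U)ᵀ =
        (restrictRows β i Y)ᵀ * restrictRows β i U) :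
    (({j : Fin p | lam j = 1}).ncard : ℤ) =
      (p : ℤ) - ∑ i : Fin k, ((restrictRows β i U).rank : ℤ) + (r : ℤ)
        - ((U - U * Yᵀ * U).rank : ℤ) := by
  have hblock : IsOrthogonalBlockInverse (restrictRows β · U) (restrictRows β · Y) :=
    ⟨fun _ _ hij => transpose_restrictRows_mul_restrictRows_of_ne β hij Y U,
      fun i => (hY i).1, fun i => (hY i).2.2.2⟩
  have hoffDiag : S - S0 = U * Uᵀ - ∑ i, restrictRows β i U * (restrictRows β i U)ᵀ := by
    rw [hS0, hS, blockPart_add, blockPart_mul_transpose, hΨblock]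
    abel
  have hmult := ncard_eq_one_add_rank_sub_of_congr_diagonal hKnorm hKdec
  have hrank := hblock.rank_offDiag_add_card (sum_restrictRows β U) (sum_restrictRows β Y)
    (hUrank.trans (Fintype.card_fin r).symm)
  rw [hoffDiag, Fintype.card_fin] at hmult
  rw [Fintype.card_fin] at hrank
  rw [← Nat.cast_sum]
  omega

/-- multiplicity of `1` as a generalized eigenvalue in the latent variable model. -/
theorem statement2
    (k p r : ℕ) (hk : 2 ≤ k) (hr : 1 ≤ r) (hrp : r ≤ p)
    (p_ : Fin k → ℕ) (hp : p = ∑ i, p_ i)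
    (β : Fin p → Fin k) (hβ : ∀ i : Fin k, ({a : Fin p | β a = i}).ncard = p_ i)
    (U : Matrix (Fin p) (Fin r) ℝ)
    (Ψ : Matrix (Fin p) (Fin p) ℝ) (hΨblock : blockPart β Ψ = Ψ) (hΨpd : Ψ.PosDef)
    (S S0 : Matrix (Fin p) (Fin p) ℝ)
    (hS : S = U * Uᵀ + Ψ) (hS0 : S0 = blockPart β S)
    (K : Matrix (Fin p) (Fin p) ℝ) (lam : Fin p → ℝ) (hlam : Antitone lam)
    (hKnorm : Kᵀ * S0 * K = 1) (hKdec : S = S0 * K * Matrix.diagonal lam * Kᵀ * S0)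
    (hUrank : U.rank = r)
    (hsig : ∀ v : Fin r → ℝ, (∑ j, v j ^ 2) ≤ v ⬝ᵥ (Uᵀ * S0⁻¹ * U).mulVec v)
    -- `Y` is the block matrix whose `i`-th block is `(U_i†)ᵀ`, characterized blockwise by
    -- the four Penrose conditions for the Moore–Penrose pseudoinverse
    (Y : Matrix (Fin p) (Fin r) ℝ)
    (hY : ∀ i : Fin k,
      restrictRows β i U * (restrictRows β i Y)ᵀ * restrictRows β i U = restrictRows β i U ∧
      (restrictRows β i Y)ᵀ * restrictRows β i U * (restrictRows β i Y)ᵀ =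
        (restrictRows β i Y)ᵀ ∧
      (restrictRows β i U * (restrictRows β i Y)ᵀ)ᵀ =
        restrictRows β i U * (restrictRows β i Y)ᵀ ∧
      ((restrictRows β i Y)ᵀ * restrictRows β i U)ᵀ =
        (restrictRows β i Y)ᵀ * restrictRows β i U) :
    (({j : Fin p | lam j = 1}).ncard : ℤ) =
      (p : ℤ) - ∑ i : Fin k, ((restrictRows β i U).rank : ℤ) + (r : ℤ)
        - ((U - U * Yᵀ * U).rank : ℤ) :=
  statement2_general k p r β U Ψ hΨblock S S0 hS hS0 K lam hKnorm hKdec hUrank Y hY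

end
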